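/- arXiv:1909.03207 — 2 statements merged into one kernel-verified Lean document; each statement's English description precedes it below -/
import Mathlib

section
/- The automorphisms σ and σ³ of sl(3,ℂ) are outer: there is no invertible 3×3 complex matrix g such that σ(X) = g X g⁻¹ for all X ∈ sl(3,ℂ), and there is no invertible 3×3 complex matrix g such that σ³(X) = g X g⁻¹ for all X ∈ sl(3,ℂ). -/
open Complex Matrix

noncomputable section

abbrev M3 := Matrix (Fin 3) (Fin 3) ℂ

/-- ε = exp(iπ/3). -/
def eps : ℂ := Complex.exp (Real.pi * Complex.I / 3)

/-- The matrix P with rows (0, ε², 0), (ε⁴, 0, 0), (0, 0, 1). -/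
def Pm : M3 := !![0, eps ^ 2, 0; eps ^ 4, 0, 0; 0, 0, 1]

/-- σ(X) = −P Xᵀ P. -/
def sigmaL (X : M3) : M3 := -(Pm * Xᵀ * Pm)

/-! Conjugation preserves the determinant, while in odd dimension `X ↦ -X` flips its sign;
so a map sending some invertible traceless `X` to `-X` is not inner. For σ we take
`X = diag(1, 1, -2)`, which commutes with the involution `P`. -/

theorem Matrix.not_exists_conj_of_map_eq_neg {n R : Type*} [Fintype n] [DecidableEq n]
    [CommRing R] [IsDomain R] [CharZero R] (hn : Odd (Fintype.card n))
    {f : Matrix n n R → Matrix n n R} {X : Matrix n n R} (hX : X.trace = 0)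
    (hdet : X.det ≠ 0) (hf : f X = -X) :
    ¬ ∃ g : Matrix n n R, IsUnit g ∧ ∀ Y : Matrix n n R, Y.trace = 0 → f Y = g * Y * g⁻¹ := by
  rintro ⟨g, hg, hconj⟩
  have hdet_eq := congrArg det (hconj X hX)
  rw [hf, det_neg, hn.neg_one_pow, det_conj hg, neg_one_mul, CharZero.neg_eq_self_iff] at hdet_eq
  exact hdet hdet_eq

lemma eps_pow_six : eps ^ 6 = 1 := by
  rw [eps, ← Complex.exp_nat_mul, ← Complex.exp_two_pi_mul_I]
  push_cast
  ring_nf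

lemma Pm_mul_self : Pm * Pm = 1 := by
  have h : eps ^ 2 * eps ^ 4 = 1 := by rw [← pow_add]; exact eps_pow_six
  ext i j
  fin_cases i <;> fin_cases j <;> simp [Pm, mul_apply, Fin.sum_univ_three, h, mul_comm]

def X0 : M3 := !![1, 0, 0; 0, 1, 0; 0, 0, -2]

lemma trace_X0 : X0.trace = 0 := by
  simp [X0, trace_fin_three]; norm_num

lemma det_X0 : X0.det ≠ 0 := by
  simp [X0, det_fin_three]

lemma Pm_commute_X0 : Commute Pm X0 := by
  ext i j
  fin_cases i <;> fin_cases j <;> simp [Pm, X0, mul_apply, Fin.sum_univ_three]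

lemma sigmaL_X0 : sigmaL X0 = -X0 := by
  have hX0 : X0ᵀ = X0 := by ext i j; fin_cases i <;> fin_cases j <;> rfl
  rw [sigmaL, hX0, Pm_commute_X0.eq, mul_assoc, Pm_mul_self, mul_one]

lemma sigmaL_neg (X : M3) : sigmaL (-X) = -sigmaL X := by
  simp [sigmaL]

/-- σ and σ³ are outer automorphisms of sl(3,ℂ): they are not given by conjugation by
any invertible 3×3 complex matrix. -/
theorem statement4 :
    (¬ ∃ g : M3, IsUnit g ∧ ∀ X : M3, X.trace = 0 → sigmaL X = g * X * g⁻¹) ∧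
    (¬ ∃ g : M3, IsUnit g ∧ ∀ X : M3, X.trace = 0 →
      sigmaL (sigmaL (sigmaL X)) = g * X * g⁻¹) := by
  have hodd : Odd (Fintype.card (Fin 3)) := by decide
  refine ⟨not_exists_conj_of_map_eq_neg hodd trace_X0 det_X0 sigmaL_X0,
    not_exists_conj_of_map_eq_neg hodd trace_X0 det_X0 ?_⟩
  simp only [sigmaL_X0, sigmaL_neg, neg_neg]
end
end

section
/- For each k ∈ {0,…,5}, the eigenspace g_k = {X ∈ sl(3,ℂ) : σ(X) = εᵏ X} is given explicitly by: g₀ = {diag(a, −a, 0) : a ∈ ℂ}; g₁ = all matrices with rows (0, b, 0), (0, 0, a), (a, 0, 0) for a, b ∈ ℂ; g₂ = all matrices with rows (0, 0, a), (0, 0, 0), (0, −a, 0) for a ∈ ℂ; g₃ = {diag(a, a, −2a) : a ∈ ℂ}; g₄ = all matrices with rows (0, 0, 0), (0, 0, a), (−a, 0, 0) for a ∈ ℂ; g₅ = all matrices with rows (0, 0, a), (b, 0, 0), (0, a, 0) for a, b ∈ ℂ. Moreover sl(3,ℂ) is the (internal) direct sum g₀ ⊕ g₁ ⊕ g₂ ⊕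 g₃ ⊕ g₄ ⊕ g₅. -/
open Complex Matrix

noncomputable section

/-- The eigenspace g_k = {X ∈ sl(3,ℂ) : σ(X) = εᵏ X}. -/
def gk (k : ℕ) : Set M3 := {X : M3 | X.trace = 0 ∧ sigmaL X = eps ^ k • X}

/-! In coordinates σ permutes the matrix entries up to the factors ±1, ε, ε² (using ε³ = −1), so
each displayed family lies in the stated eigenspace and every trace-zero `X` is the sum of its six
`eigencomponent`s. As ε is a primitive sixth root of unity, the eigenvalues ε⁰, …, ε⁵ are distinct,
and eigenspaces for distinct eigenvalues are independent. This gives uniqueness of the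
decomposition; applied to `X ∈ g_k`, placed in slot `k` with zeros elsewhere, it forces `X` to be
its own `k`-th component, which gives the reverse inclusions. -/

theorem Module.End.eq_of_sum_eq_of_mem_eigenspace {R M ι : Type*} [CommRing R] [IsDomain R]
    [AddCommGroup M] [Module R M] [Module.IsTorsionFree R M] [Fintype ι] {f : Module.End R M}
    {μ : ι → R} (hμ : Function.Injective μ) {c c' : ι → M} (hc : ∀ i, c i ∈ f.eigenspace (μ i)) (hc' : ∀ i, c' i ∈ f.eigenspace (μ i))
    (h : ∑ i, c i = ∑ i, c' i) : c = c' := by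
  have hindep := (iSupIndep_iff_finsetSum_eq_zero_imp_eq_zero _).1
    (f.eigenspaces_iSupIndep.comp hμ) Finset.univ (c - c')
    (fun i _ => Submodule.sub_mem _ (hc i) (hc' i))
    (by simp [Finset.sum_sub_distrib, h])
  funext i
  exact sub_eq_zero.1 (hindep i (Finset.mem_univ i))

lemma eps_pow_three : eps ^ 3 = -1 := by
  rw [eps, ← Complex.exp_nat_mul]
  push_cast
  rw [show 3 * (Real.pi * Complex.I / 3) = Real.pi * Complex.I by ring, Complex.exp_pi_mul_I]

lemma isPrimitiveRoot_eps : IsPrimitiveRoot eps 6 := by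
  have h : eps = Complex.exp (2 * Real.pi * Complex.I / (6 : ℕ)) := by
    rw [eps]; congr 1; push_cast; ring
  exact h ▸ Complex.isPrimitiveRoot_exp 6 (by norm_num)

lemma eps_pow_injective : Function.Injective fun k : Fin 6 => eps ^ (k : ℕ) :=
  fun i j h => Fin.ext (isPrimitiveRoot_eps.pow_inj i.isLt j.isLt h)

lemma sigmaL_eq (X : M3) : sigmaL X =
    !![-X 1 1, eps * X 0 1, -eps ^ 2 * X 2 1;
       -eps ^ 2 * X 1 0, -X 0 0, eps * X 2 0;
       eps * X 1 2, -eps ^ 2 * X 0 2, -X 2 2] := by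
  have h4 : eps ^ 4 = -eps := by linear_combination eps * eps_pow_three
  have h6 : eps ^ 6 = 1 := by linear_combination (eps ^ 3 - 1) * eps_pow_three
  have h8 : eps ^ 8 = eps ^ 2 := by linear_combination (eps ^ 5 - eps ^ 2) * eps_pow_three
  ext i j
  fin_cases i <;> fin_cases j <;>
    simp [sigmaL, Pm, Matrix.mul_apply, Fin.sum_univ_three, Matrix.vecMul, dotProduct] <;>
    ring_nf <;> simp only [h4, h6, h8] <;> ring

def sigmaLin : Module.End ℂ M3 where
  toFun := sigmaL
  map_add' X Y := by simp only [sigmaL, transpose_add, Matrix.mul_add, Matrix.add_mul, neg_add]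
  map_smul' c X := by simp [sigmaL]

lemma zero_mem_gk (k : ℕ) : (0 : M3) ∈ gk k := ⟨trace_zero _ _, by simp [sigmaL]⟩

lemma eq_of_sum_eq_of_mem_gk {c c' : Fin 6 → M3} (hc : ∀ k : Fin 6, c k ∈ gk k)
    (hc' : ∀ k : Fin 6, c' k ∈ gk k) (h : ∑ k, c k = ∑ k, c' k) : c = c' :=
  Module.End.eq_of_sum_eq_of_mem_eigenspace (f := sigmaLin) eps_pow_injective
    (fun k => Module.End.mem_eigenspace_iff.2 (hc k).2)
    (fun k => Module.End.mem_eigenspace_iff.2 (hc' k).2) h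

def eigenform : Fin 6 → Set M3 := ![
  {X | ∃ a : ℂ, X = !![a, 0, 0; 0, -a, 0; 0, 0, 0]},
  {X | ∃ a b : ℂ, X = !![0, b, 0; 0, 0, a; a, 0, 0]},
  {X | ∃ a : ℂ, X = !![0, 0, a; 0, 0, 0; 0, -a, 0]},
  {X | ∃ a : ℂ, X = !![a, 0, 0; 0, a, 0; 0, 0, -2 * a]},
  {X | ∃ a : ℂ, X = !![0, 0, 0; 0, 0, a; -a, 0, 0]},
  {X | ∃ a b : ℂ, X = !![0, 0, a; b, 0, 0; 0, a, 0]}]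

def eigencomponent (X : M3) : Fin 6 → M3 := ![
  !![(X 0 0 - X 1 1) / 2, 0, 0; 0, -((X 0 0 - X 1 1) / 2), 0; 0, 0, 0],
  !![0, X 0 1, 0; 0, 0, (X 1 2 + X 2 0) / 2; (X 1 2 + X 2 0) / 2, 0, 0],
  !![0, 0, (X 0 2 - X 2 1) / 2; 0, 0, 0; 0, -((X 0 2 - X 2 1) / 2), 0],
  !![(X 0 0 + X 1 1) / 2, 0, 0; 0, (X 0 0 + X 1 1) / 2, 0; 0, 0, -2 * ((X 0 0 + X 1 1) / 2)],
  !![0, 0, 0; 0, 0, (X 1 2 - X 2 0) / 2; -((X 1 2 - X 2 0) / 2), 0, 0],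
  !![0, 0, (X 0 2 + X 2 1) / 2; X 1 0, 0, 0; 0, (X 0 2 + X 2 1) / 2, 0]]

lemma eigencomponent_mem_eigenform (X : M3) (k : Fin 6) : eigencomponent X k ∈ eigenform k := by
  fin_cases k
  exacts [⟨_, rfl⟩, ⟨_, _, rfl⟩, ⟨_, rfl⟩, ⟨_, rfl⟩, ⟨_, rfl⟩, ⟨_, _, rfl⟩]

lemma sum_eigencomponent {X : M3} (hX : X.trace = 0) : ∑ k, eigencomponent X k = X := by
  have h22 : X 2 2 = -(X 0 0 + X 1 1) := by
    rw [trace_fin_three] at hX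
    linear_combination hX
  ext i j
  fin_cases i <;> fin_cases j <;> simp [eigencomponent, Fin.sum_univ_six, h22] <;> ring

lemma eigenform_subset_gk (k : Fin 6) : eigenform k ⊆ gk k := by
  have h4 : eps ^ 4 = -eps := by linear_combination eps * eps_pow_three
  have h5 : eps ^ 5 = -eps ^ 2 := by linear_combination eps ^ 2 * eps_pow_three
  intro X hX
  fin_cases k <;> [obtain ⟨a, rfl⟩ := hX; obtain ⟨a, b, rfl⟩ := hX; obtain ⟨a, rfl⟩ := hX;
    obtain ⟨a, rfl⟩ := hX; obtain ⟨a, rfl⟩ := hX; obtain ⟨a, b, rfl⟩ := hX]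
  all_goals refine ⟨by simp [trace_fin_three, two_mul], ?_⟩
  all_goals rw [sigmaL_eq]; ext i j; fin_cases i <;> fin_cases j <;> simp [eps_pow_three, h4, h5]

lemma gk_eq_eigenform (k : Fin 6) : gk k = eigenform k := by
  refine (eigenform_subset_gk k).antisymm' fun X hX => ?_
  have hsingle : Pi.single k X = eigencomponent X := by
    refine eq_of_sum_eq_of_mem_gk (fun j => ?_)
      (fun j => eigenform_subset_gk j (eigencomponent_mem_eigenform X j)) ?_
    · by_cases hj : j = k
      · subst hj; simpa using hX
      · simpa [Pi.single_apply, hj] using zero_mem_gk j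
    · rw [Finset.sum_pi_single', if_pos (Finset.mem_univ k), sum_eigencomponent hX.1]
  rw [← Pi.single_eq_same (M := fun _ => M3) k X, hsingle]
  exact eigencomponent_mem_eigenform X k

lemma existsUnique_sum_mem_gk {X : M3} (hX : X.trace = 0) :
    ∃! c : Fin 6 → M3, (∀ k : Fin 6, c k ∈ gk k) ∧ X = ∑ k, c k := by
  have hmem (k : Fin 6) : eigencomponent X k ∈ gk k :=
    eigenform_subset_gk k (eigencomponent_mem_eigenform X k)
  refine ⟨eigencomponent X, ⟨hmem, (sum_eigencomponent hX).symm⟩, fun c ⟨hc, hsum⟩ => ?_⟩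
  exact eq_of_sum_eq_of_mem_gk hc hmem (hsum ▸ (sum_eigencomponent hX).symm)

/-- Explicit description of the eigenspaces g₀,…,g₅ of σ, and the direct sum
decomposition sl(3,ℂ) = g₀ ⊕ g₁ ⊕ g₂ ⊕ g₃ ⊕ g₄ ⊕ g₅. -/
theorem statement5 :
    gk 0 = {X : M3 | ∃ a : ℂ, X = !![a, 0, 0; 0, -a, 0; 0, 0, 0]} ∧
    gk 1 = {X : M3 | ∃ a b : ℂ, X = !![0, b, 0; 0, 0, a; a, 0, 0]} ∧
    gk 2 = {X : M3 | ∃ a : ℂ, X = !![0, 0, a; 0, 0, 0; 0, -a, 0]} ∧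
    gk 3 = {X : M3 | ∃ a : ℂ, X = !![a, 0, 0; 0, a, 0; 0, 0, -2 * a]} ∧
    gk 4 = {X : M3 | ∃ a : ℂ, X = !![0, 0, 0; 0, 0, a; -a, 0, 0]} ∧
    gk 5 = {X : M3 | ∃ a b : ℂ, X = !![0, 0, a; b, 0, 0; 0, a, 0]} ∧
    (∀ X : M3, X.trace = 0 →
      ∃! c : Fin 6 → M3, (∀ k : Fin 6, c k ∈ gk (k : ℕ)) ∧ X = ∑ k : Fin 6, c k) :=
  ⟨gk_eq_eigenform 0, gk_eq_eigenform 1, gk_eq_eigenform 2, gk_eq_eigenform 3,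
    gk_eq_eigenform 4, gk_eq_eigenform 5, fun _ => existsUnique_sum_mem_gk⟩
end
end
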